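/- Let M be a compact connected Riemannian 4-manifold and let r₁⁺, r₂⁺, r₃⁺, r₁⁻, r₂⁻, r₃⁻ : M → ℝ be continuous functions such that (i) rᵢ⁺(x) + rⱼ⁻(x) > 0 for all x ∈ M and all i, j; (ii) at every point x, at least one of the six functions is nonpositive; (iii) at some point p, r₃⁺(p) ≤ 0 (where r₃± ≤ r₂± ≤ r₁±). Then rᵢ⁻(x) > 0 for all x ∈ M and all i. -/

import Mathlib

/-!
Let `A` be the set where some `r⁺` is nonpositive. It is closed, and so is its complement: by (ii)
the complement is where some `r⁻` is nonpositive, and by (i) no point has both a nonpositive `r⁺`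
and a nonpositive `r⁻`. Since `p ∈ A` and `M` is connected, `A = M`, and then (i) forces every
`r⁻` to be positive.
-/

open Set

section

variable {X ι κ : Type*}

lemma isClosed_setOf_exists_nonpos [TopologicalSpace X] [Finite ι] {f : ι → X → ℝ}
    (hf : ∀ i, Continuous (f i)) :
    IsClosed {x | ∃ i, f i x ≤ 0} := by
  simpa only [ofPred_exists] using
    isClosed_iUnion_of_finite fun i ↦ isClosed_le (hf i) continuous_const

lemma compl_setOf_exists_nonpos {f : ι → X → ℝ} {g : κ → X → ℝ}
    (hsum : ∀ x i j, 0 < f i x + g j x) (hcover : ∀ x, (∃ i, f i x ≤ 0) ∨ ∃ j, g j x ≤ 0) :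
    {x | ∃ i, f i x ≤ 0}ᶜ = {x | ∃ j, g j x ≤ 0} := by
  ext x
  refine ⟨fun hx ↦ (hcover x).resolve_left hx, ?_⟩
  rintro ⟨j, hj⟩ ⟨i, hi⟩
  linarith [hsum x i j]

theorem pos_of_connected_of_exists_nonpos [TopologicalSpace X] [PreconnectedSpace X]
    [Finite ι] [Finite κ]
    {f : ι → X → ℝ} {g : κ → X → ℝ} (hf : ∀ i, Continuous (f i)) (hg : ∀ j, Continuous (g j))
    (hsum : ∀ x i j, 0 < f i x + g j x) (hcover : ∀ x, (∃ i, f i x ≤ 0) ∨ ∃ j, g j x ≤ 0)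
    {p : X} {i : ι} (hp : f i p ≤ 0) (x : X) (j : κ) : 0 < g j x := by
  have hclopen : IsClopen {x | ∃ i, f i x ≤ 0} :=
    ⟨isClosed_setOf_exists_nonpos hf, by
      rw [← isClosed_compl_iff, compl_setOf_exists_nonpos hsum hcover]
      exact isClosed_setOf_exists_nonpos hg⟩
  obtain ⟨i', hi'⟩ : x ∈ {x | ∃ i, f i x ≤ 0} := hclopen.eq_univ ⟨p, i, hp⟩ ▸ mem_univ x
  linarith [hsum x i' j]

end

theorem stmt_12_general {M : Type*} [MetricSpace M] [ConnectedSpace M]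
    (rp rm : Fin 3 → M → ℝ)
    (hcp : ∀ i, Continuous (rp i)) (hcm : ∀ i, Continuous (rm i))
    (hpos : ∀ x, ∀ i j : Fin 3, rp i x + rm j x > 0)
    (hnonpos : ∀ x, (∃ i, rp i x ≤ 0) ∨ (∃ i, rm i x ≤ 0))
    (p : M) (hp : rp 2 p ≤ 0) :
    ∀ x, ∀ i : Fin 3, rm i x > 0 :=
  pos_of_connected_of_exists_nonpos hcp hcm hpos hnonpos hp

/-- Topological core of Lemma 4.  `M` is a compact connected (Riemannian
manifold, here metric) space; `rp i` and `rm i` (`i = 0, 1, 2`) are the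
continuous eigenvalue functions of `s/3 - 2W±`, ordered so that
`rp 2 ≤ rp 1 ≤ rp 0` (so `rp 2` plays the role of `r₃⁺`, etc.).  Assume
(i) `rp i x + rm j x > 0` for all `x, i, j`; (ii) at every point at least one
of the six functions is nonpositive; (iii) at some point `p`, `rp 2 p ≤ 0`.
Then `rm i x > 0` for all `x` and `i`, i.e. `s/3 - 2W⁻` is positive
everywhere. -/
theorem stmt_12 {M : Type*} [MetricSpace M] [CompactSpace M] [ConnectedSpace M]
    (rp rm : Fin 3 → M → ℝ)
    (hcp : ∀ i, Continuous (rp i)) (hcm : ∀ i, Continuous (rm i))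
    (hordp : ∀ x, rp 2 x ≤ rp 1 x ∧ rp 1 x ≤ rp 0 x)
    (hordm : ∀ x, rm 2 x ≤ rm 1 x ∧ rm 1 x ≤ rm 0 x)
    (hpos : ∀ x, ∀ i j : Fin 3, rp i x + rm j x > 0)
    (hnonpos : ∀ x, (∃ i, rp i x ≤ 0) ∨ (∃ i, rm i x ≤ 0))
    (p : M) (hp : rp 2 p ≤ 0) :
    ∀ x, ∀ i : Fin 3, rm i x > 0 :=
  stmt_12_general rp rm hcp hcm hpos hnonpos p hp
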